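/- Let x_t, t = 1,…,k+1, be generated by the OE method, and let x_{R+1} be the iterate with index R ∈ {1,…,k} minimizing ‖x_{t+1} − x_t‖² + ‖x_t − x_{t−1}‖² over t = 1,…,k. If Σ_{t=1}^k ‖x_{t+1} − x_t‖² ≤ δ, then res(x_{R+1}) ≤ 2(L + L_ω/γ_R + Lλ_R)·√(2δ)/√k. -/

import Mathlib

/-!
The minimality of `x (R + 1)` for the prox step gives the first-order condition
`⟪g + γ⁻¹ • (w' (x (R + 1)) - w' (x R)), z - x (R + 1)⟫ ≥ 0` on `X`, where `g` is the extrapolated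
operator value; so that vector lies in `-N_X(x (R + 1))`, and its distance to `F (x (R + 1))` is
controlled by the Lipschitz constants of `F` and `w'` times `‖x (R + 1) - x R‖ + ‖x R - x (R - 1)‖`.
Because `x 0 = x 1`, the sum of the squared lagged steps is dominated by the sum of the squared
steps, so by the choice of `R` we get `k (‖x (R + 1) - x R‖² + ‖x R - x (R - 1)‖²) ≤ 2δ`.
-/

open scoped RealInnerProductSpace BigOperators
open Finset

/-- The residual of a point `xb`: `res(xb) = inf { ‖y - F xb‖ : y ∈ -N_X(xb) }`,
where `N_X(xb)` is the normal cone of `X` at `xb`. -/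
noncomputable def vIResidual {n : ℕ} (X : Set (EuclideanSpace ℝ (Fin n)))
    (F : EuclideanSpace ℝ (Fin n) → EuclideanSpace ℝ (Fin n))
    (xb : EuclideanSpace ℝ (Fin n)) : ℝ :=
  sInf ((fun y => ‖y - F xb‖) ''
    {y : EuclideanSpace ℝ (Fin n) | ∀ z ∈ X, ⟪-y, z - xb⟫ ≤ 0})

theorem IsMinOn.hasFDerivAt_apply_sub_nonneg {E : Type*} [NormedAddCommGroup E]
    [NormedSpace ℝ E] {X : Set E} (hX : Convex ℝ X) {f : E → ℝ} {f' : E →L[ℝ] ℝ} {x₀ z : E}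
    (hmin : IsMinOn f X x₀) (hf : HasFDerivAt f f' x₀) (hx₀ : x₀ ∈ X) (hz : z ∈ X) :
    0 ≤ f' (z - x₀) :=
  hmin.localize.hasFDerivWithinAt_nonneg hf.hasFDerivWithinAt
    (sub_mem_posTangentConeAt_of_segment_subset (hX.segment_subset hx₀ hz))

theorem IsMinOn.inner_bregmanProx_nonneg {E : Type*} [NormedAddCommGroup E] [InnerProductSpace ℝ E]
    [CompleteSpace E] {X : Set E} (hX : Convex ℝ X) {w : E → ℝ} {w' : E → E} {γ : ℝ}
    (hγ : 0 < γ) {g x y z : E}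
    (hmin : IsMinOn (fun z => γ * ⟪g, z⟫ + (w z - w x - ⟪w' x, z - x⟫)) X y)
    (hw : HasGradientAt w (w' y) y)
    (hy : y ∈ X) (hz : z ∈ X) :
    0 ≤ ⟪g + γ⁻¹ • (w' y - w' x), z - y⟫ := by
  have hderiv := (((innerSL ℝ g).hasFDerivAt (x := y)).const_mul γ).add
    ((hasGradientAt_iff_hasFDerivAt.mp hw).sub_const (w x) |>.sub
      (((innerSL ℝ (w' x)).hasFDerivAt.comp y ((hasFDerivAt_id y).sub_const x))))
  have := hmin.hasFDerivAt_apply_sub_nonneg hX hderiv hy hz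
  simp only [ContinuousLinearMap.comp_id, add_apply, smul_apply, sub_apply, smul_eq_mul,
    coe_innerSL_apply, InnerProductSpace.toDual_apply_apply] at this
  calc 0 ≤ γ⁻¹ * (γ * ⟪g, z - y⟫ + (⟪w' y, z - y⟫ - ⟪w' x, z - y⟫)) :=
        mul_nonneg (inv_nonneg.2 hγ.le) this
    _ = ⟪g + γ⁻¹ • (w' y - w' x), z - y⟫ := by
        rw [inner_add_left, real_inner_smul_left, inner_sub_left]
        field_simp

theorem vIResidual_le_of_inner_nonneg {n : ℕ} {X : Set (EuclideanSpace ℝ (Fin n))}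
    {F : EuclideanSpace ℝ (Fin n) → EuclideanSpace ℝ (Fin n)} {xb y : EuclideanSpace ℝ (Fin n)}
    (hy : ∀ z ∈ X, 0 ≤ ⟪y, z - xb⟫) : vIResidual X F xb ≤ ‖y - F xb‖ :=
  csInf_le ⟨0, by rintro _ ⟨_, -, rfl⟩; exact norm_nonneg _⟩
    ⟨y, fun z hz => by rw [inner_neg_left]; linarith [hy z hz], rfl⟩

theorem vIResidual_oe_step_le {n : ℕ} {X : Set (EuclideanSpace ℝ (Fin n))} (hX : Convex ℝ X)
    {F : EuclideanSpace ℝ (Fin n) → EuclideanSpace ℝ (Fin n)} {L : ℝ} (hL : 0 ≤ L)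
    (hLip : ∀ x₁ ∈ X, ∀ x₂ ∈ X, ‖F x₁ - F x₂‖ ≤ L * ‖x₁ - x₂‖)
    {w : EuclideanSpace ℝ (Fin n) → ℝ} {w' : EuclideanSpace ℝ (Fin n) → EuclideanSpace ℝ (Fin n)}
    (hwgrad : ∀ x ∈ X, HasGradientAt w (w' x) x) {Lw : ℝ} (hLw : 0 ≤ Lw)
    (hwLip : ∀ x₁ ∈ X, ∀ x₂ ∈ X, ‖w' x₁ - w' x₂‖ ≤ Lw * ‖x₁ - x₂‖)
    {γ lam : ℝ} (hγ : 0 < γ) (hlam : 0 ≤ lam) {x₀ x₁ x₂ : EuclideanSpace ℝ (Fin n)}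
    (hx₀ : x₀ ∈ X) (hx₁ : x₁ ∈ X) (hx₂ : x₂ ∈ X)
    (hmin : IsMinOn (fun z => γ * ⟪F x₁ + lam • (F x₁ - F x₀), z⟫
      + (w z - w x₁ - ⟪w' x₁, z - x₁⟫)) X x₂) :
    vIResidual X F x₂ ≤ (L + Lw / γ + L * lam) * (‖x₂ - x₁‖ + ‖x₁ - x₀‖) := by
  refine (vIResidual_le_of_inner_nonneg fun z hz =>
    hmin.inner_bregmanProx_nonneg hX hγ (hwgrad x₂ hx₂) hx₂ hz).trans ?_
  have hsplit : F x₁ + lam • (F x₁ - F x₀) + γ⁻¹ • (w' x₂ - w' x₁) - F x₂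
      = (F x₁ - F x₂) + lam • (F x₁ - F x₀) + γ⁻¹ • (w' x₂ - w' x₁) := by
    abel
  have hF₂ : ‖F x₁ - F x₂‖ ≤ L * ‖x₂ - x₁‖ := by
    simpa only [norm_sub_rev x₁] using hLip x₁ hx₁ x₂ hx₂
  have hF₀ : ‖lam • (F x₁ - F x₀)‖ ≤ lam * (L * ‖x₁ - x₀‖) := by
    rw [norm_smul, Real.norm_of_nonneg hlam]
    exact mul_le_mul_of_nonneg_left (hLip x₁ hx₁ x₀ hx₀) hlam
  have hw : ‖γ⁻¹ • (w' x₂ - w' x₁)‖ ≤ γ⁻¹ * (Lw * ‖x₂ - x₁‖) := by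
    rw [norm_smul, Real.norm_of_nonneg (inv_nonneg.2 hγ.le)]
    exact mul_le_mul_of_nonneg_left (hwLip x₂ hx₂ x₁ hx₁) (inv_nonneg.2 hγ.le)
  rw [hsplit, div_eq_mul_inv]
  refine (norm_add₃_le).trans ?_
  have := mul_nonneg hL (norm_nonneg (x₁ - x₀))
  have := mul_nonneg (mul_nonneg hL hlam) (norm_nonneg (x₂ - x₁))
  have := mul_nonneg (mul_nonneg hLw (inv_nonneg.2 hγ.le)) (norm_nonneg (x₁ - x₀))
  linarith

theorem sum_Icc_pred_add_eq {M : Type*} [AddCommMonoid M] {f : ℕ → M} (hf : f 0 = 0) (k : ℕ) :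
    ∑ t ∈ Icc 1 k, f (t - 1) + f k = ∑ t ∈ Icc 1 k, f t := by
  induction k with
  | zero => simp [hf]
  | succ k ih =>
    rw [sum_Icc_succ_top (by omega), sum_Icc_succ_top (by omega), ← ih, Nat.add_sub_cancel,
      add_right_comm]

theorem natCast_mul_min_sq_steps_le_two_mul {E : Type*} [SeminormedAddCommGroup E] {x : ℕ → E}
    (hx0 : x 0 = x 1) {k R : ℕ} {δ : ℝ}
    (hRmin : ∀ t, 1 ≤ t → t ≤ k →
      ‖x (R + 1) - x R‖ ^ 2 + ‖x R - x (R - 1)‖ ^ 2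
        ≤ ‖x (t + 1) - x t‖ ^ 2 + ‖x t - x (t - 1)‖ ^ 2)
    (hδ : ∑ t ∈ Icc 1 k, ‖x (t + 1) - x t‖ ^ 2 ≤ δ) :
    (k : ℝ) * (‖x (R + 1) - x R‖ ^ 2 + ‖x R - x (R - 1)‖ ^ 2) ≤ 2 * δ := by
  have hshift : ∑ t ∈ Icc 1 k, ‖x t - x (t - 1)‖ ^ 2 + ‖x (k + 1) - x k‖ ^ 2
      = ∑ t ∈ Icc 1 k, ‖x (t + 1) - x t‖ ^ 2 := by
    rw [← sum_Icc_pred_add_eq (f := fun t => ‖x (t + 1) - x t‖ ^ 2) (by simp [hx0])]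
    congr 1
    exact sum_congr rfl fun t ht => by rw [Nat.sub_add_cancel (mem_Icc.1 ht).1]
  have hsum := card_nsmul_le_sum (Icc 1 k) _ _ fun t ht =>
    hRmin t (mem_Icc.1 ht).1 (mem_Icc.1 ht).2
  rw [Nat.card_Icc, Nat.add_sub_cancel, nsmul_eq_mul, sum_add_distrib] at hsum
  linarith [sq_nonneg ‖x (k + 1) - x k‖]

theorem add_le_two_mul_sqrt_div_sqrt {a b δ k : ℝ} (hk : 0 < k)
    (h : k * (a ^ 2 + b ^ 2) ≤ 2 * δ) :
    a + b ≤ 2 * (Real.sqrt (2 * δ) / Real.sqrt k) := by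
  have hδ : 0 ≤ 2 * δ := le_trans (by positivity) h
  refine le_of_pow_le_pow_left₀ two_ne_zero (by positivity) ?_
  rw [mul_pow, div_pow, Real.sq_sqrt hδ, Real.sq_sqrt hk.le, ← mul_div_assoc, le_div_iff₀ hk]
  nlinarith [sq_nonneg (a - b)]

theorem oe_residual_bound_general
    {n : ℕ} (k : ℕ)
    (X : Set (EuclideanSpace ℝ (Fin n)))
    (hXcv : Convex ℝ X)
    (F : EuclideanSpace ℝ (Fin n) → EuclideanSpace ℝ (Fin n))
    (L : ℝ) (hL : 0 < L)
    (hLip : ∀ x₁ ∈ X, ∀ x₂ ∈ X, ‖F x₁ - F x₂‖ ≤ L * ‖x₁ - x₂‖)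
    -- the distance generating function: strongly convex, differentiable with gradient `w'`
    -- which is Lipschitz continuous with constant `Lw`
    (w : EuclideanSpace ℝ (Fin n) → ℝ)
    (w' : EuclideanSpace ℝ (Fin n) → EuclideanSpace ℝ (Fin n))
    (hwgrad : ∀ x ∈ X, HasGradientAt w (w' x) x)
    (Lw : ℝ) (hLw : 0 ≤ Lw)
    (hwLip : ∀ x₁ ∈ X, ∀ x₂ ∈ X, ‖w' x₁ - w' x₂‖ ≤ Lw * ‖x₁ - x₂‖)
    (V : EuclideanSpace ℝ (Fin n) → EuclideanSpace ℝ (Fin n) → ℝ)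
    (hV : ∀ a b, V a b = w b - w a - ⟪w' a, b - a⟫)
    -- algorithmic parameters
    (γ lam : ℕ → ℝ)
    (hγpos : ∀ t, 0 < γ t) (hlampos : ∀ t, 0 ≤ lam t)
    -- the OE iterates
    (x : ℕ → EuclideanSpace ℝ (Fin n))
    (hx0 : x 0 = x 1) (hx1 : x 1 ∈ X)
    (hstep : ∀ t, 1 ≤ t → t ≤ k →
      x (t + 1) ∈ X ∧
      IsMinOn (fun z => γ t * ⟪F (x t) + lam t • (F (x t) - F (x (t - 1))), z⟫ + V (x t) z)
        X (x (t + 1)))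
    -- `R` is the index minimizing `‖x_{t+1} - x_t‖² + ‖x_t - x_{t-1}‖²` over `t ∈ {1,…,k}`
    (R : ℕ) (hR1 : 1 ≤ R) (hRk : R ≤ k)
    (hRmin : ∀ t, 1 ≤ t → t ≤ k →
      ‖x (R + 1) - x R‖ ^ 2 + ‖x R - x (R - 1)‖ ^ 2
        ≤ ‖x (t + 1) - x t‖ ^ 2 + ‖x t - x (t - 1)‖ ^ 2)
    (δ : ℝ)
    (hδ : ∑ t ∈ Icc 1 k, ‖x (t + 1) - x t‖ ^ 2 ≤ δ) :
    vIResidual X F (x (R + 1))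
      ≤ 2 * (L + Lw / γ R + L * lam R) * (Real.sqrt (2 * δ) / Real.sqrt k) := by
  have hmem : ∀ t ≤ k + 1, x t ∈ X
    | 0, _ => hx0 ▸ hx1
    | 1, _ => hx1
    | t + 2, ht => (hstep (t + 1) (by omega) (by omega)).1
  have hminR := (hstep R hR1 hRk).2
  simp only [hV] at hminR
  have hres := vIResidual_oe_step_le hXcv hL.le hLip hwgrad hLw hwLip (hγpos R) (hlampos R)
    (hmem (R - 1) (by omega)) (hmem R (by omega)) (hmem (R + 1) (by omega)) hminR
  have hgap := add_le_two_mul_sqrt_div_sqrt (by exact_mod_cast (by omega : 0 < k))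
    (natCast_mul_min_sq_steps_le_two_mul hx0 hRmin hδ)
  have hC : 0 ≤ L + Lw / γ R + L * lam R := by
    have := hγpos R
    have := hlampos R
    positivity
  calc vIResidual X F (x (R + 1))
      ≤ (L + Lw / γ R + L * lam R) * (‖x (R + 1) - x R‖ + ‖x R - x (R - 1)‖) := hres
    _ ≤ (L + Lw / γ R + L * lam R) * (2 * (Real.sqrt (2 * δ) / Real.sqrt k)) :=
        mul_le_mul_of_nonneg_left hgap hC
    _ = _ := by ring

/-- Lemma 2.2: bound on the residual of the best iterate of the OE method. -/
theorem oe_residual_bound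
    {n : ℕ} (k : ℕ) (hk : 1 ≤ k)
    (X : Set (EuclideanSpace ℝ (Fin n)))
    (hXne : X.Nonempty) (hXcl : IsClosed X) (hXcv : Convex ℝ X)
    (F : EuclideanSpace ℝ (Fin n) → EuclideanSpace ℝ (Fin n))
    (L : ℝ) (hL : 0 < L)
    (hLip : ∀ x₁ ∈ X, ∀ x₂ ∈ X, ‖F x₁ - F x₂‖ ≤ L * ‖x₁ - x₂‖)
    -- the distance generating function: strongly convex, differentiable with gradient `w'`
    -- which is Lipschitz continuous with constant `Lw`
    (w : EuclideanSpace ℝ (Fin n) → ℝ)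
    (w' : EuclideanSpace ℝ (Fin n) → EuclideanSpace ℝ (Fin n))
    (hwsc : StrongConvexOn X 1 w)
    (hwgrad : ∀ x ∈ X, HasGradientAt w (w' x) x)
    (Lw : ℝ) (hLw : 0 ≤ Lw)
    (hwLip : ∀ x₁ ∈ X, ∀ x₂ ∈ X, ‖w' x₁ - w' x₂‖ ≤ Lw * ‖x₁ - x₂‖)
    (V : EuclideanSpace ℝ (Fin n) → EuclideanSpace ℝ (Fin n) → ℝ)
    (hV : ∀ a b, V a b = w b - w a - ⟪w' a, b - a⟫)
    (hVlb : ∀ a ∈ X, ∀ b ∈ X, (1 : ℝ) / 2 * ‖a - b‖ ^ 2 ≤ V a b)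
    -- algorithmic parameters
    (γ lam : ℕ → ℝ)
    (hγpos : ∀ t, 0 < γ t) (hlampos : ∀ t, 0 ≤ lam t)
    -- the OE iterates
    (x : ℕ → EuclideanSpace ℝ (Fin n))
    (hx0 : x 0 = x 1) (hx1 : x 1 ∈ X)
    (hstep : ∀ t, 1 ≤ t → t ≤ k →
      x (t + 1) ∈ X ∧
      IsMinOn (fun z => γ t * ⟪F (x t) + lam t • (F (x t) - F (x (t - 1))), z⟫ + V (x t) z)
        X (x (t + 1)))
    -- `R` is the index minimizing `‖x_{t+1} - x_t‖² + ‖x_t - x_{t-1}‖²` over `t ∈ {1,…,k}`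
    (R : ℕ) (hR1 : 1 ≤ R) (hRk : R ≤ k)
    (hRmin : ∀ t, 1 ≤ t → t ≤ k →
      ‖x (R + 1) - x R‖ ^ 2 + ‖x R - x (R - 1)‖ ^ 2
        ≤ ‖x (t + 1) - x t‖ ^ 2 + ‖x t - x (t - 1)‖ ^ 2)
    (δ : ℝ)
    (hδ : ∑ t ∈ Icc 1 k, ‖x (t + 1) - x t‖ ^ 2 ≤ δ) :
    vIResidual X F (x (R + 1))
      ≤ 2 * (L + Lw / γ R + L * lam R) * (Real.sqrt (2 * δ) / Real.sqrt k) :=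
  oe_residual_bound_general k X hXcv F L hL hLip w w' hwgrad Lw hLw hwLip V hV γ lam hγpos hlampos x
    hx0 hx1 hstep R hR1 hRk hRmin δ hδ
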